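/- arXiv:1606.01810 — 4 statements merged into one kernel-verified Lean document; each statement's English description precedes it below -/
import Mathlib

section
/- (Time Complexity Stability, part i) For a computable dynamical system S with initial state M₀ and environment E, there exists a constant c depending on S, E and M₀ but not on t, such that for every t, if t is the first time at which state M_t is reached, then |K(M_t) − K(t)| ≤ c. -/
/-!
Simulating the system computes `state t` from `t`, so `K (state t) ≤ K t + c`.
Conversely, when `t` is the first time `state t` occurs, `t` is recovered from `state t`
by the unbounded search for the least `n` with `state n = state t`; this search is a
partial computable function, so `K t ≤ K (state t) + c`.
-/

def Nat.firstHit {α : Type*} [DecidableEq α] (f : ℕ → α) (x : α) : Part ℕ :=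
  Nat.rfind fun n => Part.some (decide (f n = x))

theorem Nat.mem_firstHit_iff {α : Type*} [DecidableEq α] (f : ℕ → α) (t : ℕ) :
    t ∈ Nat.firstHit f (f t) ↔ ∀ s < t, f s ≠ f t := by
  refine Nat.mem_rfind.trans ?_
  simp

theorem Computable.partrec_firstHit {α : Type*} [Primcodable α] [DecidableEq α]
    {f : ℕ → α} (hf : Computable f) : Partrec (Nat.firstHit f) := by
  refine Partrec.rfind ?_
  have hdec : Computable₂ fun (x : α) (n : ℕ) => decide (f n = x) :=
    (Primrec.eq.decide.to_comp : Computable₂ fun a b : α => decide (a = b)).comp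
      (hf.comp Computable.snd) Computable.fst
  exact hdec.partrec₂

/-- Time Complexity Stability, part i: For a computable dynamical
system with state function `state : t ↦ S(M₀,E,t)`, there is a constant `c`
(depending on the system, environment and initial state but not on `t`) such that
whenever `t` is the first time at which the state `state t` is reached,
`|K (state t) - K t| ≤ c`.  Hypotheses: `hK1` invariance for computable functions
(the simulation bound), `hK2` invariance for partial computable functions (the
exhaustive-search bound recovering `t` from `state t`). -/
theorem time_complexity_stability_i
    (K : ℕ → ℕ) (state : ℕ → ℕ) (hstate : Computable state)
    (hK1 : ∀ f : ℕ → ℕ, Computable f → ∃ c : ℕ, ∀ t, K (f t) ≤ K t + c)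
    (hK2 : ∀ f : ℕ →. ℕ, Partrec f → ∃ c : ℕ, ∀ x y, y ∈ f x → K y ≤ K x + c) :
    ∃ c : ℕ, ∀ t : ℕ, (∀ s < t, state s ≠ state t) →
      K (state t) ≤ K t + c ∧ K t ≤ K (state t) + c := by
  obtain ⟨c₁, hsimulate⟩ := hK1 state hstate
  obtain ⟨c₂, hsearch⟩ := hK2 _ hstate.partrec_firstHit
  refine ⟨max c₁ c₂, fun t hfirst => ⟨?_, ?_⟩⟩
  · exact (hsimulate t).trans (by gcongr; exact le_max_left _ _)
  · have ht : t ∈ Nat.firstHit state (state t) := (Nat.mem_firstHit_iff state t).mpr hfirst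
    exact (hsearch _ _ ht).trans (by gcongr; exact le_max_right _ _)
end

section
/- (Time Complexity Stability, part ii) Let S and S′ be computable dynamical systems with K(S(M₀,E,t)) = K(S′(M₀′,E′,t′)) + O(1) and K(M₀) = K(M₀′) + O(1), where t and t′ are the minimum times at which the corresponding states are reached. Then there exists a constant c independent of t such that |K(t) − K(t′)| ≤ c. -/
/-- Time Complexity Stability, part ii: Let `st`, `st'` be the state
functions of two computable dynamical systems, with initial states `M₀`, `M₀'`,
and let `τ` pair each time `t` of the first system with the corresponding time
`t' = τ t` of the second.  If the states are equally complex up to a constant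
(`hstates`), the initial states are equally complex up to a constant (`hinit`),
and part (i) holds for both systems (`h1`, `h1'`), then there is a constant `c`
independent of `t` such that `|K t - K (τ t)| ≤ c` whenever `t` and `τ t` are the
minimum times at which the corresponding states are reached. -/
theorem time_complexity_stability_ii
    (K : ℕ → ℕ) (st st' : ℕ → ℕ) (τ : ℕ → ℕ) (M₀ M₀' : ℕ)
    (h1 : ∃ c₁ : ℕ, ∀ t, (∀ s < t, st s ≠ st t) →
      K (st t) ≤ K t + c₁ ∧ K t ≤ K (st t) + c₁)
    (h1' : ∃ c₂ : ℕ, ∀ t, (∀ s < t, st' s ≠ st' t) →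
      K (st' t) ≤ K t + c₂ ∧ K t ≤ K (st' t) + c₂)
    (hstates : ∃ a : ℕ, ∀ t, K (st t) ≤ K (st' (τ t)) + a ∧ K (st' (τ t)) ≤ K (st t) + a)
    (hinit : ∃ b : ℕ, K M₀ ≤ K M₀' + b ∧ K M₀' ≤ K M₀ + b) :
    ∃ c : ℕ, ∀ t : ℕ, (∀ s < t, st s ≠ st t) → (∀ s < τ t, st' s ≠ st' (τ t)) →
      K t ≤ K (τ t) + c ∧ K (τ t) ≤ K t + c := by
  obtain ⟨c₁, h1⟩ := h1
  obtain ⟨c₂, h1'⟩ := h1'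
  obtain ⟨a, hst⟩ := hstates
  refine ⟨c₁ + c₂ + a, fun t ht ht' => ?_⟩
  obtain ⟨p1, p2⟩ := h1 t ht
  obtain ⟨q1, q2⟩ := h1' (τ t) ht'
  obtain ⟨r1, r2⟩ := hst t
  omega
end

section
/- Let δ₁, δ₂, … be a sequence of pairwise distinct natural numbers such that δ : i ↦ δ_i is computable. Then there exist constants c and a (with c depending on δ and a fixed inverse-search program) and an infinite subsequence of indices i (the r-random indices for any fixed r) on which soph_c(δ_i) ≤ K(δ) + O(log log i); i.e., the sophistication at a fixed significance level of δ_i is bounded by a constant plus a double-logarithmic term in i. -/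
/-- The length `|⟨p⟩|` of the description of a program (a code of the reference
universal machine). -/
def codeLen (p : Nat.Partrec.Code) : ℕ := Nat.size (Encodable.encode p)

/-- Koppel's sophistication of `x` at significance level `c` (relative to the
complexity measure `K`): the least `|⟨p⟩|` over total programs `p` and inputs `y`
with `p y = x` and `|⟨p⟩| + |y| ≤ K x + c`. -/
noncomputable def soph (K : ℕ → ℕ) (c : ℕ) (x : ℕ) : ℕ :=
  sInf {n : ℕ | ∃ (p : Nat.Partrec.Code) (y : ℕ),
    (∀ z : ℕ, ((p.eval z).Dom)) ∧ x ∈ p.eval y ∧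
    codeLen p + Nat.size y ≤ K x + c ∧ n = codeLen p}

/-- Lemma lemSoph1: Let `δ` be a computable sequence of pairwise
distinct naturals, with complexity `kδ` (hypothesis `hinv`: invariance via `δ`
and its computable inverse).  Then there are constants `c`, `a` such that on an
infinite set of indices (the `r`-random ones, which exist for every `r`,
hypothesis `hrand`, and satisfy their randomness inequality tightly by `hEnc`),
`soph_c (δ i) ≤ kδ + a·(log log i + 1)`. -/
theorem sophistication_bounded_on_computable_sequences
    (K : ℕ → ℕ)
    (hEnc : ∃ c₀ : ℕ, ∀ x : ℕ, K x ≤ Nat.size x + 2 * Nat.size (Nat.size x) + c₀)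
    (hrand : ∀ r : ℕ, {i : ℕ | Nat.size i ≤ K i + r}.Infinite)
    (δ : ℕ → ℕ) (hδinj : Function.Injective δ) (hδ : Computable δ)
    (kδ : ℕ)
    (hinv : ∃ c : ℕ, ∀ i, K (δ i) ≤ kδ + K i + c ∧ K i ≤ kδ + K (δ i) + c) :
    ∃ c a : ℕ,
      {i : ℕ | soph K c (δ i) ≤ kδ + a * (Nat.size (Nat.size i) + 1)}.Infinite := by
  obtain ⟨c₁, hc₁⟩ := hinv
  -- get a code for δ
  have hpart : Nat.Partrec (fun n => Part.some (δ n)) := by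
    have := Computable.partrec hδ
    rwa [Partrec.nat_iff] at this
  obtain ⟨p, hp⟩ := Nat.Partrec.Code.exists_code.mp hpart
  refine ⟨codeLen p + kδ + c₁, codeLen p, ?_⟩
  refine (hrand 0).mono ?_
  intro i hi
  simp only [Set.mem_setOf_eq, add_zero] at hi ⊢
  have hmem : codeLen p ∈ {n : ℕ | ∃ (q : Nat.Partrec.Code) (y : ℕ),
      (∀ z : ℕ, ((q.eval z).Dom)) ∧ δ i ∈ q.eval y ∧
      codeLen q + Nat.size y ≤ K (δ i) + (codeLen p + kδ + c₁) ∧ n = codeLen q} := by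
    refine ⟨p, i, ?_, ?_, ?_, rfl⟩
    · intro z; rw [hp]; trivial
    · rw [hp]; exact Part.mem_some _
    · have h1 : Nat.size i ≤ kδ + K (δ i) + c₁ := hi.trans (hc₁ i).2
      omega
  have := Nat.sInf_le hmem
  calc soph K (codeLen p + kδ + c₁) (δ i) ≤ codeLen p := this
    _ ≤ kδ + codeLen p * (Nat.size (Nat.size i) + 1) := by nlinarith [Nat.size (Nat.size i)]
end

section
/- Let δ₁, δ₂, … be a sequence of pairwise distinct natural numbers with δ : i ↦ δ_i computable. Then there is an infinite subsequence of indices i on which the coarse sophistication satisfies csoph(δ_i) ≤ 2K(δ) + O(1) + O(log log i). -/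
/-- The length `|⟨y⟩| = |y| + 2 log |y| + 1` of the self-delimiting encoding of `y`. -/
def selfDelimLen (y : ℕ) : ℕ := Nat.size y + 2 * Nat.size (Nat.size y) + 1

/-- Coarse sophistication of `x` (relative to `K`), adjusted (as in the paper) to
avoid negative values: the least `2|⟨p⟩| + |⟨y⟩| - K x` over total programs `p`
with `p y = x`. -/
noncomputable def csoph (K : ℕ → ℕ) (x : ℕ) : ℕ :=
  sInf {n : ℕ | ∃ (p : Nat.Partrec.Code) (y : ℕ),
    (∀ z : ℕ, ((p.eval z).Dom)) ∧ x ∈ p.eval y ∧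
    n = 2 * codeLen p + selfDelimLen y - K x}

/-- Lemma coarseSophLem: Let `δ` be a computable sequence of
pairwise distinct naturals with complexity `kδ`.  Then on an infinite set of
indices, `csoph (δ i) ≤ 2 kδ + c + a·(log log i + 1)` for suitable constants. -/
theorem coarse_sophistication_bounded_on_computable_sequences
    (K : ℕ → ℕ)
    (hEnc : ∃ c₀ : ℕ, ∀ x : ℕ, K x ≤ Nat.size x + 2 * Nat.size (Nat.size x) + c₀)
    (hrand : ∀ r : ℕ, {i : ℕ | Nat.size i ≤ K i + r}.Infinite)
    (δ : ℕ → ℕ) (hδinj : Function.Injective δ) (hδ : Computable δ)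
    (kδ : ℕ)
    (hinv : ∃ c : ℕ, ∀ i, K (δ i) ≤ kδ + K i + c ∧ K i ≤ kδ + K (δ i) + c) :
    ∃ c a : ℕ,
      {i : ℕ | csoph K (δ i) ≤ 2 * kδ + c + a * (Nat.size (Nat.size i) + 1)}.Infinite := by
  obtain ⟨c', hc'⟩ := hinv
  obtain ⟨cδ, hcδ⟩ := Nat.Partrec.Code.exists_code.1 (Partrec.nat_iff.1 hδ)
  refine ⟨2 * codeLen cδ + c' + 1, 2, (hrand 0).mono ?_⟩
  intro i hi
  simp only [Set.mem_setOf_eq, add_zero] at hi ⊢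
  have hmem : (2 * codeLen cδ + selfDelimLen i - K (δ i)) ∈
      {n : ℕ | ∃ (p : Nat.Partrec.Code) (y : ℕ),
        (∀ z : ℕ, ((p.eval z).Dom)) ∧ δ i ∈ p.eval y ∧
        n = 2 * codeLen p + selfDelimLen y - K (δ i)} := by
    refine ⟨cδ, i, ?_, ?_, rfl⟩
    · intro z; rw [hcδ]; trivial
    · rw [hcδ]; simp [Part.coe_some]
  have h1 : csoph K (δ i) ≤ 2 * codeLen cδ + selfDelimLen i - K (δ i) :=
    Nat.sInf_le hmem
  have h2 := (hc' i).2
  have h3 : Nat.size i ≤ K i := hi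
  refine h1.trans ?_
  unfold selfDelimLen
  omega
end
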